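/- arXiv:1805.08954 — 4 statements merged into one kernel-verified Lean document; each statement's English description precedes it below -/
import Mathlib

section
/- Contiguous relation for monic big q-Jacobi polynomials in the first parameter: for n ≥ 1, P̃_n(x; α/q, β, γ; q) = P̃_n(x; α, β, γ; q) + [α q (q^n − 1)(β q^n − 1)(γ q^n − 1) / ((αβ q^{2n} − 1)(αβ q^{2n} − q))] · P̃_{n−1}(x; α, β, γ; q), as an identity of polynomials in x (valid whenever the denominators are nonzero). -/
/-- The q-Pochhammer symbol `(a; q)_m`. -/
noncomputable def qPoch (q a : ℝ) (m : ℕ) : ℝ := ∏ j ∈ Finset.range m, (1 - a * q ^ j)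

/-- The monic big q-Jacobi polynomial
`P̃_n(x; α, β, γ; q) = ((αq;q)_n (γq;q)_n / (αβq^{n+1};q)_n) ₃φ₂(q^{-n}, αβq^{n+1}, x; αq, γq; q, q)`. -/
noncomputable def bigQJacobi (q α β γ : ℝ) (n : ℕ) (x : ℝ) : ℝ :=
  (qPoch q (α * q) n * qPoch q (γ * q) n / qPoch q (α * β * q ^ (n + 1)) n) *
    ∑ m ∈ Finset.range (n + 1),
      qPoch q (q ^ (-(n : ℤ))) m * qPoch q (α * β * q ^ (n + 1)) m * qPoch q x m * q ^ m /
        (qPoch q (α * q) m * qPoch q (γ * q) m * qPoch q q m)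

/-!
Expand all three polynomials in the basis `(x; q)_m`. The `m`-th coefficients of
`P̃_n(α/q)`, `P̃_n(α)` and `P̃_{n-1}(α)` share a common product of `q`-Pochhammer symbols, and
after it is cancelled the relation becomes, with `t = q^n` and `s = q^m`, the elementary identity
`(1 - αs)(1 - αβt²) = (1 - αt)(1 - αβts) + α(1 - βt)(t - s)`.
The coefficient of `(x; q)_n` in `P̃_{n-1}` vanishes since `(q^{1-n}; q)_n = 0`, so the sums match
term by term.
-/

lemma qPoch_succ (q a : ℝ) (k : ℕ) :
    qPoch q a (k + 1) = qPoch q a k * (1 - a * q ^ k) := Finset.prod_range_succ _ _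

lemma qPoch_succ' (q a : ℝ) (k : ℕ) :
    qPoch q a (k + 1) = (1 - a) * qPoch q (a * q) k := by
  rw [qPoch, Finset.prod_range_succ', pow_zero, mul_one, mul_comm]
  congr 1
  exact Finset.prod_congr rfl fun j _ => by ring

lemma qPoch_shift_eq {q a : ℝ} (ha : a ≠ 1) (m : ℕ) :
    qPoch q (a * q) m = qPoch q a m * (1 - a * q ^ m) / (1 - a) := by
  rw [eq_div_iff (sub_ne_zero.mpr ha.symm), ← qPoch_succ, qPoch_succ', mul_comm]

lemma qPoch_eq_zero_of_mul_pow_eq_one {q a : ℝ} {m j : ℕ} (hj : j < m) (h : a * q ^ j = 1) :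
    qPoch q a m = 0 :=
  Finset.prod_eq_zero (Finset.mem_range.mpr hj) (by rw [h, sub_self])

lemma qPoch_inv_shift_eq {q t : ℝ} (ht₀ : t ≠ 0) (ht₁ : t ≠ 1) (m : ℕ) :
    qPoch q (t⁻¹ * q) m = qPoch q t⁻¹ m * (t - q ^ m) / (t - 1) := by
  have : t - 1 ≠ 0 := sub_ne_zero.mpr ht₁
  rw [qPoch_shift_eq (inv_ne_one.mpr ht₁)]
  field_simp

noncomputable def bigQJacobiCoeff (q α β γ : ℝ) (n m : ℕ) : ℝ :=
  qPoch q (α * q) n * qPoch q (γ * q) n / qPoch q (α * β * q ^ (n + 1)) n *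
    (qPoch q (q ^ (-(n : ℤ))) m * qPoch q (α * β * q ^ (n + 1)) m * q ^ m /
      (qPoch q (α * q) m * qPoch q (γ * q) m * qPoch q q m))

lemma bigQJacobi_eq_sum (q α β γ : ℝ) (n : ℕ) (x : ℝ) :
    bigQJacobi q α β γ n x =
      ∑ m ∈ Finset.range (n + 1), bigQJacobiCoeff q α β γ n m * qPoch q x m := by
  rw [bigQJacobi, Finset.mul_sum]
  congr! 1 with m
  rw [bigQJacobiCoeff]
  ring

lemma bigQJacobiCoeff_succ_self (q α β γ : ℝ) (n : ℕ) (hq : q ≠ 0) :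
    bigQJacobiCoeff q α β γ n (n + 1) = 0 := by
  have : qPoch q (q ^ (-(n : ℤ))) (n + 1) = 0 :=
    qPoch_eq_zero_of_mul_pow_eq_one (Nat.lt_succ_self n) <| by
      rw [zpow_neg, zpow_natCast, inv_mul_cancel₀ (pow_ne_zero n hq)]
  rw [bigQJacobiCoeff, this, zero_mul, zero_mul, zero_div, mul_zero]

lemma contiguous_alpha_ratio_identity {q α β γ r s t : ℝ} (ht : t = q * r) (hq : q ≠ 0)
    (ht₁ : t ≠ 1) (hαs : α * s ≠ 1) (hb₀ : α * β * t ≠ 1) (hb₁ : α * β * t * r ≠ 1)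
    (hb₂ : α * β * t * t ≠ 1) :
    (1 - γ * t) / (1 - α * β * t * r)
      = (1 - α * t) * (1 - γ * t) * (1 - α * β * t) * (1 - α * β * t * s) /
          ((1 - α * β * t * r) * (1 - α * β * t * t) * (1 - α * s) * (1 - α * β * t))
        + α * q * (t - 1) * (β * t - 1) * (γ * t - 1) /
            ((α * β * t * t - 1) * (α * β * t * t - q)) *
          ((t - s) / ((t - 1) * (1 - α * s))) := by
  have e₁ : 1 - α * β * t * r ≠ 0 := sub_ne_zero.mpr hb₁.symm
  have e₂ : 1 - α * β * t * t ≠ 0 := sub_ne_zero.mpr hb₂.symm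
  have e₃ : 1 - α * s ≠ 0 := sub_ne_zero.mpr hαs.symm
  have e₄ : 1 - α * β * t ≠ 0 := sub_ne_zero.mpr hb₀.symm
  have e₅ : t - 1 ≠ 0 := sub_ne_zero.mpr ht₁
  have e₆ : α * β * t * t - 1 ≠ 0 := sub_ne_zero.mpr hb₂
  have e₇ : α * β * t * t - q ≠ 0 := fun h =>
    e₁ (mul_left_cancel₀ hq (by linear_combination α * β * t * ht - h))
  rw [div_mul_div_comm, div_add_div _ _ (by simp [*, -ht]) (by simp [*, -ht]),
    div_eq_div_iff (by simp [*, -ht]) (by simp [*, -ht])]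
  subst ht
  ring

lemma bigQJacobiCoeff_shift_alpha {q α β : ℝ} (γ : ℝ) {k : ℕ} (m : ℕ)
    (hq : q ≠ 0) (hqk : q ^ (k + 1) ≠ 1) (hα : α ≠ 1) (hαm : α * q ^ m ≠ 1)
    (hαβ : ∀ e : ℕ, α * β * q ^ e ≠ 1) :
    bigQJacobiCoeff q (α / q) β γ (k + 1) m
      = bigQJacobiCoeff q α β γ (k + 1) m
        + (α * q * (q ^ (k + 1) - 1) * (β * q ^ (k + 1) - 1) * (γ * q ^ (k + 1) - 1) /
            ((α * β * q ^ (2 * (k + 1)) - 1) * (α * β * q ^ (2 * (k + 1)) - q))) *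
          bigQJacobiCoeff q α β γ k m := by
  have hb : α * β * q ^ (k + 1) ≠ 1 := hαβ _
  set c := (1 - α) * qPoch q (α * q) k * qPoch q (γ * q) k / qPoch q (α * β * q ^ (k + 1)) k *
    (qPoch q (q ^ (k + 1))⁻¹ m * qPoch q (α * β * q ^ (k + 1)) m * q ^ m /
      (qPoch q α m * qPoch q (γ * q) m * qPoch q q m))
  have h_shift : bigQJacobiCoeff q (α / q) β γ (k + 1) m
      = c * ((1 - γ * q ^ (k + 1)) / (1 - α * β * q ^ (k + 1) * q ^ k)) := by
    simp only [bigQJacobiCoeff, zpow_neg, zpow_natCast, div_mul_cancel₀ α hq,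
      show α / q * β * q ^ (k + 1 + 1) = α * β * q ^ (k + 1) by field_simp; ring]
    rw [qPoch_succ' q α, qPoch_succ q (γ * q), qPoch_succ q (α * β * q ^ (k + 1))]
    simp only [c, div_eq_mul_inv, mul_inv]
    ring
  have h_same : bigQJacobiCoeff q α β γ (k + 1) m
      = c * ((1 - α * q ^ (k + 1)) * (1 - γ * q ^ (k + 1)) * (1 - α * β * q ^ (k + 1)) *
            (1 - α * β * q ^ (k + 1) * q ^ m) /
          ((1 - α * β * q ^ (k + 1) * q ^ k) * (1 - α * β * q ^ (k + 1) * q ^ (k + 1)) *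
            (1 - α * q ^ m) * (1 - α * β * q ^ (k + 1)))) := by
    simp only [bigQJacobiCoeff, zpow_neg, zpow_natCast,
      show α * β * q ^ (k + 1 + 1) = α * β * q ^ (k + 1) * q by ring]
    rw [qPoch_succ q (α * q), qPoch_succ q (γ * q), qPoch_shift_eq hb (k + 1),
      qPoch_succ q (α * β * q ^ (k + 1)), qPoch_shift_eq hb m, qPoch_shift_eq hα m]
    simp only [c, div_eq_mul_inv, mul_inv, inv_inv]
    ring
  have h_pred : bigQJacobiCoeff q α β γ k m
      = c * ((q ^ (k + 1) - q ^ m) / ((q ^ (k + 1) - 1) * (1 - α * q ^ m))) := by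
    simp only [bigQJacobiCoeff, zpow_neg, zpow_natCast,
      show (q ^ k)⁻¹ = (q ^ (k + 1))⁻¹ * q by field_simp; ring]
    rw [qPoch_inv_shift_eq (pow_ne_zero _ hq) hqk, qPoch_shift_eq hα m]
    simp only [c, div_eq_mul_inv, mul_inv, inv_inv]
    ring
  rw [h_shift, h_same, h_pred, mul_left_comm _ c, ← mul_add,
    show α * β * q ^ (2 * (k + 1)) = α * β * q ^ (k + 1) * q ^ (k + 1) by ring]
  congr 1
  exact contiguous_alpha_ratio_identity (pow_succ' q k) hq hqk hαm hb
    (by rw [mul_assoc, ← pow_add]; exact hαβ _) (by rw [mul_assoc, ← pow_add]; exact hαβ _)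

theorem bigQJacobi_shift_alpha_general (q α β γ : ℝ) (n : ℕ)
    (hq : 0 < q) (hq1 : q < 1) (hn : 1 ≤ n)
    (hα : ∀ m : ℕ, α * q ^ m ≠ 1)
    (hαβ : ∀ m : ℕ, α * β * q ^ m ≠ 1) :
    ∀ x : ℝ,
      bigQJacobi q (α / q) β γ n x
        = bigQJacobi q α β γ n x
          + (α * q * (q ^ n - 1) * (β * q ^ n - 1) * (γ * q ^ n - 1) /
              ((α * β * q ^ (2 * n) - 1) * (α * β * q ^ (2 * n) - q))) *
            bigQJacobi q α β γ (n - 1) x := by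
  intro x
  obtain ⟨k, rfl⟩ : ∃ k, n = k + 1 := ⟨n - 1, by omega⟩
  have hqk : q ^ (k + 1) ≠ 1 := (pow_lt_one₀ hq.le hq1 k.succ_ne_zero).ne
  have h_pred : bigQJacobi q α β γ k x
      = ∑ m ∈ Finset.range (k + 1 + 1), bigQJacobiCoeff q α β γ k m * qPoch q x m := by
    rw [bigQJacobi_eq_sum, Finset.sum_range_succ _ (k + 1),
      bigQJacobiCoeff_succ_self q α β γ k hq.ne', zero_mul, add_zero]
  rw [Nat.add_sub_cancel, h_pred, bigQJacobi_eq_sum, bigQJacobi_eq_sum, Finset.mul_sum,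
    ← Finset.sum_add_distrib]
  refine Finset.sum_congr rfl fun m _ => ?_
  rw [bigQJacobiCoeff_shift_alpha γ m hq.ne' hqk (by simpa using hα 0) (hα m) hαβ]
  ring

/-- Contiguous relation for monic big q-Jacobi polynomials in the first parameter. -/
theorem bigQJacobi_shift_alpha (q α β γ : ℝ) (n : ℕ)
    (hq : 0 < q) (hq1 : q < 1) (hn : 1 ≤ n)
    (hα : ∀ m : ℕ, α * q ^ m ≠ 1) (hγ : ∀ m : ℕ, γ * q ^ m ≠ 1)
    (hαβ : ∀ m : ℕ, α * β * q ^ m ≠ 1) :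
    ∀ x : ℝ,
      bigQJacobi q (α / q) β γ n x
        = bigQJacobi q α β γ n x
          + (α * q * (q ^ n - 1) * (β * q ^ n - 1) * (γ * q ^ n - 1) /
              ((α * β * q ^ (2 * n) - 1) * (α * β * q ^ (2 * n) - q))) *
            bigQJacobi q α β γ (n - 1) x :=
  bigQJacobi_shift_alpha_general q α β γ n hq hq1 hn hα hαβ
end

section
/- Second-order shift relation for monic Al-Salam–Carlitz I polynomials: for n ≥ 2, Ũ_n^{(α/q²)}(x; q) = Ũ_n^{(α)}(x; q) + [α (q^n − 1)(q + 1)/q²] · Ũ_{n−1}^{(α)}(x; q) + [α² (q^n − 1)(q^n − q)/q⁴] · Ũ_{n−2}^{(α)}(x; q), as an identity of polynomials in x. -/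
/-- The monic Al-Salam–Carlitz I polynomial
`Ũ_n^{(α)}(x; q) = (−α)^n q^{n(n−1)/2} ₂φ₁(q^{-n}, x^{-1}; 0; q, qx/α)`, written in its
polynomial form using `(x^{-1};q)_m (qx/α)^m = (q/α)^m ∏_{j=0}^{m-1} (x − q^j)`. -/
noncomputable def alSalamCarlitzI (q α : ℝ) (n : ℕ) (x : ℝ) : ℝ :=
  (-α) ^ n * q ^ (n * (n - 1) / 2) *
    ∑ m ∈ Finset.range (n + 1),
      qPoch q (q ^ (-(n : ℤ))) m * (q / α) ^ m *
          (∏ j ∈ Finset.range m, (x - q ^ j)) / qPoch q q m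

lemma qPoch_shift (q a : ℝ) (m : ℕ) :
    (1 - a) * qPoch q (a * q) m = (1 - a * q ^ m) * qPoch q a m := by
  induction m with
  | zero => simp [qPoch]
  | succ m ih =>
    simp only [qPoch, Finset.prod_range_succ] at *
    linear_combination (1 - a * q * q ^ m) * ih

lemma qPoch_inv_zero (q : ℝ) (hq : q ≠ 0) (r m : ℕ) (h : r < m) :
    qPoch q ((q ^ r)⁻¹) m = 0 := by
  apply Finset.prod_eq_zero (Finset.mem_range.2 h)
  simp [inv_mul_cancel₀ (pow_ne_zero r hq)]

lemma qPoch_q_ne (q : ℝ) (hq : 0 < q) (hq1 : q < 1) (m : ℕ) : qPoch q q m ≠ 0 := by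
  unfold qPoch
  rw [Finset.prod_ne_zero_iff]
  intro j hj
  have h1 : q * q ^ j ≤ q * 1 := by
    have := pow_le_one₀ hq.le hq1.le (n := j)
    nlinarith
  have : q * q ^ j < 1 := by linarith
  intro hcon
  nlinarith

lemma tri_aux (k : ℕ) : ∃ t, k*(k-1) = 2*t := by
  cases k with
  | zero => exact ⟨0, rfl⟩
  | succ j =>
    obtain ⟨t, ht⟩ := Nat.even_mul_succ_self j
    refine ⟨t, ?_⟩
    rw [show j+1-1 = j by omega, Nat.mul_comm (j+1) j]
    omega

lemma tri_one (k : ℕ) : (k+2) * (k+2-1) / 2 = k*(k-1)/2 + (2*k+1) := by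
  have h1 : (k+2)*(k+2-1) = k*(k-1) + 4*k + 2 := by
    cases k with
    | zero => rfl
    | succ j =>
      rw [show j+1+2-1 = j+2 by omega, show j+1-1 = j by omega]
      ring
  obtain ⟨t, ht⟩ := tri_aux k
  omega

lemma tri_two (k : ℕ) : (k+1) * (k+1-1) / 2 = k*(k-1)/2 + k := by
  have h1 : (k+1)*(k+1-1) = k*(k-1) + 2*k := by
    cases k with
    | zero => rfl
    | succ j =>
      rw [show j+1+1-1 = j+1 by omega, show j+1-1 = j by omega]
      ring
  obtain ⟨t, ht⟩ := tri_aux k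
  omega

set_option maxHeartbeats 1000000 in
/-- Second-order shift relation for monic Al-Salam–Carlitz I polynomials. -/
theorem alSalamCarlitzI_shift_two (q α : ℝ) (n : ℕ)
    (hq : 0 < q) (hq1 : q < 1) (hα : α ≠ 0) (hn : 2 ≤ n) :
    ∀ x : ℝ,
      alSalamCarlitzI q (α / q ^ 2) n x
        = alSalamCarlitzI q α n x
          + (α * (q ^ n - 1) * (q + 1) / q ^ 2) * alSalamCarlitzI q α (n - 1) x
          + (α ^ 2 * (q ^ n - 1) * (q ^ n - q) / q ^ 4) * alSalamCarlitzI q α (n - 2) x := by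
  obtain ⟨k, rfl⟩ : ∃ k, n = k + 2 := ⟨n - 2, by omega⟩
  intro x
  have hq0 : q ≠ 0 := hq.ne'
  rw [show k + 2 - 1 = k + 1 by omega, show k + 2 - 2 = k by omega]
  simp only [alSalamCarlitzI]
  simp only [zpow_neg, zpow_natCast]
  rw [tri_one k, tri_two k, pow_add, pow_add]
  -- extend the shorter sums to range (k+2+1)
  have hsum1 :
      (∑ m ∈ Finset.range (k+1+1),
        qPoch q ((q ^ (k+1))⁻¹) m * (q / α) ^ m *
          (∏ j ∈ Finset.range m, (x - q ^ j)) / qPoch q q m)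
      = ∑ m ∈ Finset.range (k+2+1),
        qPoch q ((q ^ (k+1))⁻¹) m * (q / α) ^ m *
          (∏ j ∈ Finset.range m, (x - q ^ j)) / qPoch q q m := by
    refine Finset.sum_subset (Finset.range_subset_range.2 (by omega)) fun m hmt hms => ?_
    simp only [Finset.mem_range] at hmt hms
    rw [qPoch_inv_zero q hq0 (k+1) m (by omega)]
    simp
  have hsum2 :
      (∑ m ∈ Finset.range (k+1),
        qPoch q ((q ^ k)⁻¹) m * (q / α) ^ m *
          (∏ j ∈ Finset.range m, (x - q ^ j)) / qPoch q q m)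
      = ∑ m ∈ Finset.range (k+2+1),
        qPoch q ((q ^ k)⁻¹) m * (q / α) ^ m *
          (∏ j ∈ Finset.range m, (x - q ^ j)) / qPoch q q m := by
    refine Finset.sum_subset (Finset.range_subset_range.2 (by omega)) fun m hmt hms => ?_
    simp only [Finset.mem_range] at hmt hms
    rw [qPoch_inv_zero q hq0 k m (by omega)]
    simp
  rw [hsum1, hsum2]
  -- rewrite the bases in terms of b = (q^(k+2))⁻¹
  have hb1 : ((q:ℝ) ^ (k+1))⁻¹ = (q ^ (k+2))⁻¹ * q := by
    field_simp
    ring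
  have hb0 : ((q:ℝ) ^ k)⁻¹ = (q ^ (k+2))⁻¹ * q * q := by
    field_simp
    ring
  rw [hb1, hb0]
  -- combine into a single sum
  simp only [Finset.mul_sum]
  rw [← Finset.sum_add_distrib, ← Finset.sum_add_distrib]
  refine Finset.sum_congr rfl fun m hm => ?_
  -- nonvanishing facts
  have hQpos : (0:ℝ) < q ^ (k+2) := pow_pos hq _
  have hQlt : (q:ℝ) ^ (k+2) < 1 := pow_lt_one₀ hq.le hq1 (by omega)
  have hbgt : 1 < ((q:ℝ) ^ (k+2))⁻¹ := (one_lt_inv₀ hQpos).2 hQlt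
  have hbne : (1:ℝ) - (q ^ (k+2))⁻¹ ≠ 0 := by linarith
  have hbqne : (1:ℝ) - (q ^ (k+2))⁻¹ * q ≠ 0 := by
    rw [← hb1]
    have hQpos1 : (0:ℝ) < q ^ (k+1) := pow_pos hq _
    have hQlt1 : (q:ℝ) ^ (k+1) < 1 := pow_lt_one₀ hq.le hq1 (by omega)
    have := (one_lt_inv₀ hQpos1).2 hQlt1
    linarith
  have hQne : (q:ℝ) ^ (k+2) ≠ 0 := pow_ne_zero _ hq0
  have hQ1ne : (q:ℝ) ^ (k+2) - 1 ≠ 0 := by linarith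
  have hQqne : (q:ℝ) ^ (k+2) - q ≠ 0 := by
    have h1 : (q:ℝ) ^ (k+1) < 1 := pow_lt_one₀ hq.le hq1 (by omega)
    have h2 : (q:ℝ) ^ (k+2) = q ^ (k+1) * q := by ring
    nlinarith
  have hQinv : q ^ (k+2) * (q ^ (k+2))⁻¹ = 1 := mul_inv_cancel₀ hQne
  have hs1 := qPoch_shift q ((q ^ (k+2))⁻¹) m
  have hs2 := qPoch_shift q ((q ^ (k+2))⁻¹ * q) m
  set C0 := qPoch q ((q ^ (k+2))⁻¹) m with hC0
  set C1 := qPoch q ((q ^ (k+2))⁻¹ * q) m with hC1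
  set C2 := qPoch q ((q ^ (k+2))⁻¹ * q * q) m with hC2
  set W := qPoch q q m with hWdef
  set P := (∏ j ∈ Finset.range m, (x - q ^ j)) with hPdef
  have hW : W ≠ 0 := qPoch_q_ne q hq hq1 m
  have hA1 : C1 = (q ^ (k+2) - q ^ m) * C0 / (q ^ (k+2) - 1) := by
    rw [eq_div_iff hQ1ne]
    linear_combination q ^ (k+2) * hs1 + (C1 - q ^ m * C0) * hQinv
  have hA2 : C2 = (q ^ (k+2) - q * q ^ m) * C1 / (q ^ (k+2) - q) := by
    rw [eq_div_iff hQqne]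
    linear_combination q ^ (k+2) * hs2 + (q * C2 - q * q ^ m * C1) * hQinv
  rw [hA2, hA1]
  have hqq : q ^ (k * 2) * q⁻¹ ^ (k * 2) = 1 := by
    rw [inv_pow, mul_inv_cancel₀ (pow_ne_zero _ hq0)]
  field_simp
  linear_combination (α ^ 2 * α ^ k * q * q ^ (k * (k - 1) / 2) * q ^ (m * 3) * C0 * α⁻¹ ^ m * P * (-1) ^ k) * hqq
end

section
/- Contiguous relation for monic Racah polynomials in α: for n ≥ 1, R̃_n(λ(x); α−1, β, γ, δ) = R̃_n(λ(x); α, β, γ, δ) − [n(β+n)(β+δ+n)(γ+n) / ((2n+α+β)(2n+α+β−1))] · R̃_{n−1}(λ(x); α, β, γ, δ), as an identity of polynomials in the variable λ(x) = x(x+γ+δ+1) (assuming the denominators are nonzero). -/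
/-- The (rising) Pochhammer symbol `(a)_m = ∏_{j=0}^{m-1} (a + j)` over ℝ. -/
noncomputable def rPoch (a : ℝ) (m : ℕ) : ℝ := ∏ j ∈ Finset.range m, (a + j)

/-- The monic Racah polynomial, as a function of the real variable `x`
(the natural variable being `λ(x) = x(x+γ+δ+1)`):
`R̃_n(λ(x); α,β,γ,δ) = ((α+1)_n (β+δ+1)_n (γ+1)_n / (n+α+β+1)_n)
  ₄F₃(−n, n+α+β+1, −x, x+γ+δ+1; α+1, β+δ+1, γ+1; 1)`. -/
noncomputable def racah (α β γ δ : ℝ) (n : ℕ) (x : ℝ) : ℝ :=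
  (rPoch (α + 1) n * rPoch (β + δ + 1) n * rPoch (γ + 1) n /
      rPoch ((n : ℝ) + α + β + 1) n) *
    ∑ m ∈ Finset.range (n + 1),
      rPoch (-(n : ℝ)) m * rPoch ((n : ℝ) + α + β + 1) m *
          rPoch (-x) m * rPoch (x + γ + δ + 1) m /
        (rPoch (α + 1) m * rPoch (β + δ + 1) m * rPoch (γ + 1) m * (Nat.factorial m : ℝ))


/-
Expand both sides in the basis `(-x)_m (x+γ+δ+1)_m`. Cancelling the normalisation against the
denominators of the ₄F₃, the `m`-th coefficient of `R̃_n` becomes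
`(-n)_m / m! · (α+m+1)_{n-m} (β+δ+m+1)_{n-m} (γ+m+1)_{n-m} / (n+α+β+m+1)_{n-m}`.
For `m = n` it does not depend on `α`; for `m < n` the three coefficients involved share a common
factor, and the relation reduces to the linear identity
`(α+m)(2n+α+β) = (α+n)(n+m+α+β) - (n-m)(β+n)`.
-/

section Pochhammer

variable (a : ℝ)

@[simp]
lemma rPoch_zero : rPoch a 0 = 1 := by
  simp [rPoch]

lemma rPoch_succ (m : ℕ) : rPoch a (m + 1) = rPoch a m * (a + m) :=
  Finset.prod_range_succ _ _

lemma rPoch_succ' (m : ℕ) : rPoch a (m + 1) = a * rPoch (a + 1) m := by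
  simp only [rPoch, Finset.prod_range_succ', Nat.cast_add, Nat.cast_one, Nat.cast_zero, add_zero]
  ring_nf

lemma rPoch_add (m k : ℕ) : rPoch a (m + k) = rPoch a m * rPoch (a + m) k := by
  simp only [rPoch, Finset.prod_range_add, Nat.cast_add, add_assoc]

lemma rPoch_add_one_mul (m : ℕ) : rPoch (a + 1) m * a = rPoch a m * (a + m) := by
  rw [← rPoch_succ, rPoch_succ', mul_comm]

lemma rPoch_add_one_eq_mul_div (ha : a ≠ 0) (m : ℕ) :
    rPoch (a + 1) m = rPoch a m * (a + m) / a := by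
  rw [eq_div_iff ha, rPoch_add_one_mul]

lemma rPoch_eq_mul_div {m : ℕ} (h : a + m ≠ 0) :
    rPoch a m = rPoch (a + 1) m * a / (a + m) := by
  rw [eq_div_iff h, rPoch_add_one_mul]

lemma ne_zero_of_eq_add_int {c : ℝ} (hc : ∀ k : ℤ, c + k ≠ 0) (t : ℤ) (ha : a = c + t) : a ≠ 0 :=
  ha ▸ hc t

lemma rPoch_ne_zero_of_eq_add_int {c : ℝ} (hc : ∀ k : ℤ, c + k ≠ 0) (t : ℤ) (ha : a = c + t)
    (m : ℕ) : rPoch a m ≠ 0 :=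
  Finset.prod_ne_zero_iff.mpr fun j _ =>
    ne_zero_of_eq_add_int _ hc (t + j) (by push_cast; rw [ha]; ring)

end Pochhammer

noncomputable def racahCoeff (α β γ δ : ℝ) (n m : ℕ) : ℝ :=
  rPoch (-(n : ℝ)) m / (m.factorial : ℝ) *
    (rPoch (α + 1 + m) (n - m) * rPoch (β + δ + 1 + m) (n - m) * rPoch (γ + 1 + m) (n - m) /
      rPoch ((n : ℝ) + α + β + 1 + m) (n - m))

lemma racah_eq_sum_racahCoeff {α β γ δ : ℝ} (hα : ∀ k : ℤ, α + k ≠ 0)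
    (hβδ : ∀ k : ℤ, β + δ + k ≠ 0) (hγ : ∀ k : ℤ, γ + k ≠ 0) (hαβ : ∀ k : ℤ, α + β + k ≠ 0)
    (n : ℕ) (x : ℝ) :
    racah α β γ δ n x = ∑ m ∈ Finset.range (n + 1),
      racahCoeff α β γ δ n m * (rPoch (-x) m * rPoch (x + γ + δ + 1) m) := by
  rw [racah, Finset.mul_sum]
  refine Finset.sum_congr rfl fun m hm => ?_
  obtain ⟨k, rfl⟩ := Nat.exists_eq_add_of_le (Finset.mem_range_succ_iff.mp hm)
  have hA := rPoch_ne_zero_of_eq_add_int (α + 1) hα 1 (by simp)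
  have hB := rPoch_ne_zero_of_eq_add_int (β + δ + 1) hβδ 1 (by simp)
  have hG := rPoch_ne_zero_of_eq_add_int (γ + 1) hγ 1 (by simp)
  have hN := rPoch_ne_zero_of_eq_add_int ((↑(m + k) : ℝ) + α + β + 1) hαβ (m + k + 1)
    (by push_cast; ring)
  have hN' := rPoch_ne_zero_of_eq_add_int ((↑(m + k) : ℝ) + α + β + 1 + m) hαβ (2 * m + k + 1)
    (by push_cast; ring)
  rw [racahCoeff, Nat.add_sub_cancel_left, rPoch_add (α + 1), rPoch_add (β + δ + 1),
    rPoch_add (γ + 1), rPoch_add ((↑(m + k) : ℝ) + α + β + 1)]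
  field_simp [hA m, hB m, hG m, hN m, hN' k]
  rw [div_eq_div_iff (mul_ne_zero (hN m) (hN' k)) (hN' k)]
  ring

lemma racahCoeff_sub_one {α β : ℝ} (γ δ : ℝ) (hαβ : ∀ k : ℤ, α + β + k ≠ 0) {n m : ℕ}
    (hmn : m < n) :
    racahCoeff (α - 1) β γ δ n m
      = racahCoeff α β γ δ n m
        - ((n : ℝ) * (β + n) * (β + δ + n) * (γ + n) / ((2 * n + α + β) * (2 * n + α + β - 1))) *
          racahCoeff α β γ δ (n - 1) m := by
  obtain ⟨k, rfl⟩ : ∃ k, n = m + k + 1 := ⟨n - m - 1, by omega⟩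
  set N : ℝ := ((m + k + 1 : ℕ) : ℝ) with hN
  set A : ℝ := α + m
  set S : ℝ := N + α + β + m
  have hS : ∀ t : ℕ, S + t ≠ 0 := fun t =>
    ne_zero_of_eq_add_int _ hαβ (2 * m + k + 1 + t) (by simp only [S, hN]; push_cast; ring)
  have hS0 : S ≠ 0 := by simpa using hS 0
  have hSk1 : S + 1 + k ≠ 0 := by convert hS (k + 1) using 1; push_cast; ring
  have hPS : rPoch (S + 1) k ≠ 0 :=
    rPoch_ne_zero_of_eq_add_int _ hαβ (2 * m + k + 2) (by simp only [S, hN]; push_cast; ring) k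
  have hN0 : N ≠ 0 := by positivity
  set F : ℝ := rPoch (-N) m / m.factorial *
    (rPoch (A + 1) k * rPoch (β + δ + 1 + m) k * rPoch (γ + 1 + m) k / rPoch (S + 1) k)
  have hcoeff_shift : racahCoeff (α - 1) β γ δ (m + k + 1) m
      = F * (A * (β + δ + 1 + m + k) * (γ + 1 + m + k) / S) := by
    simp only [racahCoeff, show m + k + 1 - m = k + 1 by omega]
    rw [← hN, show α - 1 + 1 + m = A by ring, show N + (α - 1) + β + 1 + m = S by ring,
      rPoch_succ' A, rPoch_succ (β + δ + 1 + m), rPoch_succ (γ + 1 + m), rPoch_succ' S]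
    simp only [F]
    field_simp
  have hcoeff : racahCoeff α β γ δ (m + k + 1) m
      = F * ((A + 1 + k) * (β + δ + 1 + m + k) * (γ + 1 + m + k) / (S + 1 + k)) := by
    simp only [racahCoeff, show m + k + 1 - m = k + 1 by omega]
    rw [← hN, show α + 1 + m = A + 1 by ring, show N + α + β + 1 + m = S + 1 by ring,
      rPoch_succ (A + 1), rPoch_succ (β + δ + 1 + m), rPoch_succ (γ + 1 + m), rPoch_succ (S + 1)]
    simp only [F]
    field_simp
  have hcoeff_pred : racahCoeff α β γ δ (m + k + 1 - 1) m = F * ((k + 1) / N * (S + k) / S) := by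
    simp only [racahCoeff, Nat.add_sub_cancel, Nat.add_sub_cancel_left]
    rw [show ((m + k : ℕ) : ℝ) + α + β + 1 + m = S by simp only [S, hN]; push_cast; ring,
      show -((m + k : ℕ) : ℝ) = -N + 1 by simp only [hN]; push_cast; ring,
      show α + 1 + m = A + 1 by ring, rPoch_eq_mul_div _ (hS k),
      rPoch_add_one_eq_mul_div _ (neg_ne_zero.mpr hN0),
      show -N + m = -(k + 1) by simp only [hN]; push_cast; ring]
    simp only [F]
    field_simp
  have hK : N * (β + N) * (β + δ + N) * (γ + N) / ((2 * N + α + β) * (2 * N + α + β - 1))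
      = N * (S - A) * (β + δ + 1 + m + k) * (γ + 1 + m + k) / ((S + 1 + k) * (S + k)) := by
    simp only [S, A, hN]
    push_cast
    ring
  rw [hcoeff_shift, hcoeff, hcoeff_pred, hK]
  field_simp [hS k]
  ring

lemma racahCoeff_self (α β γ δ : ℝ) (n : ℕ) :
    racahCoeff α β γ δ n n = rPoch (-(n : ℝ)) n / (n.factorial : ℝ) := by
  simp [racahCoeff]

/-- Contiguous relation for monic Racah polynomials in α. -/
theorem racah_shift_alpha (α β γ δ : ℝ) (n : ℕ) (hn : 1 ≤ n)
    (hα : ∀ k : ℤ, α + (k : ℝ) ≠ 0) (hβδ : ∀ k : ℤ, β + δ + (k : ℝ) ≠ 0)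
    (hγ : ∀ k : ℤ, γ + (k : ℝ) ≠ 0) (hαβ : ∀ k : ℤ, α + β + (k : ℝ) ≠ 0) :
    ∀ x : ℝ,
      racah (α - 1) β γ δ n x
        = racah α β γ δ n x
          - ((n : ℝ) * (β + n) * (β + δ + n) * (γ + n) /
              ((2 * n + α + β) * (2 * n + α + β - 1))) *
            racah α β γ δ (n - 1) x := by
  intro x
  have hα' : ∀ k : ℤ, α - 1 + k ≠ 0 := fun k => by
    convert hα (k - 1) using 1; push_cast; ring
  have hαβ' : ∀ k : ℤ, α - 1 + β + k ≠ 0 := fun k => by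
    convert hαβ (k - 1) using 1; push_cast; ring
  have hsum := Finset.sum_congr (s₁ := Finset.range n) rfl fun m hm =>
    congrArg (· * (rPoch (-x) m * rPoch (x + γ + δ + 1) m))
      (racahCoeff_sub_one γ δ hαβ (Finset.mem_range.mp hm))
  simp only [sub_mul, mul_assoc, Finset.sum_sub_distrib, ← Finset.mul_sum] at hsum
  rw [racah_eq_sum_racahCoeff hα' hβδ hγ hαβ', racah_eq_sum_racahCoeff hα hβδ hγ hαβ,
    racah_eq_sum_racahCoeff hα hβδ hγ hαβ, Nat.sub_add_cancel hn, Finset.sum_range_succ,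
    Finset.sum_range_succ, racahCoeff_self, racahCoeff_self, hsum]
  ring
end

section
/- Contiguous relation for monic continuous Hahn polynomials in a: for n ≥ 1, P̃_n(x; a−1, b, c, d) = P̃_n(x; a, b, c, d) + [i n (b+c+n−1)(b+d+n−1) / ((2n+a+b+c+d−3)(2n+a+b+c+d−2))] · P̃_{n−1}(x; a, b, c, d), as an identity of polynomials in x (assuming the denominators are nonzero). -/
/-- The (rising) Pochhammer symbol `(a)_m = ∏_{j=0}^{m-1} (a + j)` over ℂ. -/
noncomputable def cPoch (a : ℂ) (m : ℕ) : ℂ := ∏ j ∈ Finset.range m, (a + j)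

/-- The monic continuous Hahn polynomial, as a function of the real variable `x`:
`P̃_n(x; a,b,c,d) = (i^n (a+c)_n (a+d)_n / (n+a+b+c+d−1)_n)
  ₃F₂(−n, n+a+b+c+d−1, a+ix; a+c, a+d; 1)`. -/
noncomputable def contHahn (a b c d : ℂ) (n : ℕ) (x : ℝ) : ℂ :=
  (Complex.I ^ n * cPoch (a + c) n * cPoch (a + d) n /
      cPoch ((n : ℂ) + a + b + c + d - 1) n) *
    ∑ m ∈ Finset.range (n + 1),
      cPoch (-(n : ℂ)) m * cPoch ((n : ℂ) + a + b + c + d - 1) m *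
          cPoch (a + Complex.I * x) m /
        (cPoch (a + c) m * cPoch (a + d) m * (Nat.factorial m : ℂ))

/-!
Put `u = a + c`, `v = a + d`, `σ = n + a + b + c + d - 1` and `X = a + i x`, so that
`P̃_n = Σ_m C_m(n; u, v, σ) (X)_m`, and note `b + c + n - 1 = σ - v`, `b + d + n - 1 = σ - u`.
Lowering `a` lowers `u, v, σ, X` by one. Since `(X - 1)_{m+1} = (X)_{m+1} - (m + 1) (X)_m`,
summation by parts expands the left-hand side in the basis `(X)_m` as well, and the relation
then holds coefficient by coefficient: after cancelling a common factor, each coefficient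
identity is a quadratic polynomial identity in `u, v, σ, m, n`.
-/

open Finset Complex

@[simp]
lemma cPoch_zero (X : ℂ) : cPoch X 0 = 1 := by simp [cPoch]

lemma cPoch_succ (X : ℂ) (m : ℕ) : cPoch X (m + 1) = cPoch X m * (X + m) := by
  simp [cPoch, prod_range_succ]

lemma cPoch_sub_one_succ (X : ℂ) (m : ℕ) : cPoch (X - 1) (m + 1) = (X - 1) * cPoch X m := by
  simp only [cPoch, prod_range_succ']
  push_cast
  ring_nf

lemma cPoch_sub_one_mul (X : ℂ) (m : ℕ) :
    cPoch (X - 1) m * (X + m - 1) = (X - 1) * cPoch X m := by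
  rw [← cPoch_sub_one_succ, cPoch_succ]
  ring

lemma cPoch_sub_one_eq_div {X : ℂ} {m : ℕ} (h : X + m - 1 ≠ 0) :
    cPoch (X - 1) m = (X - 1) * cPoch X m / (X + m - 1) := by
  rw [eq_div_iff h, cPoch_sub_one_mul]

lemma cPoch_eq_cPoch_sub_one_mul_div {X : ℂ} {m : ℕ} (h : X - 1 ≠ 0) :
    cPoch X m = cPoch (X - 1) m * (X + m - 1) / (X - 1) := by
  rw [eq_div_iff h, cPoch_sub_one_mul]
  ring

lemma cPoch_neg_natCast_of_lt {n m : ℕ} (h : n < m) : cPoch (-n) m = 0 :=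
  prod_eq_zero (mem_range.mpr h) (by simp)

lemma cPoch_ne_zero {X : ℂ} (h : ∀ j : ℤ, X + j ≠ 0) (m : ℕ) : cPoch X m ≠ 0 :=
  prod_ne_zero_iff.mpr fun j _ => by exact_mod_cast h j

lemma sum_mul_cPoch_sub_one (f : ℕ → ℂ) (X : ℂ) (N : ℕ) :
    ∑ m ∈ range (N + 1), f m * cPoch (X - 1) m
      = ∑ m ∈ range (N + 1), (f m - (m + 1) * f (m + 1)) * cPoch X m
        + (N + 1) * f (N + 1) * cPoch X N := by
  induction N with
  | zero => simp
  | succ N ih =>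
    rw [sum_range_succ, ih, sum_range_succ _ (N + 1), cPoch_sub_one_succ, cPoch_succ]
    push_cast
    ring

noncomputable def hahnCoeff (n : ℕ) (u v σ : ℂ) (m : ℕ) : ℂ :=
  I ^ n * cPoch u n * cPoch v n / cPoch σ n *
    (cPoch (-(n : ℂ)) m * cPoch σ m / (cPoch u m * cPoch v m * m.factorial))

lemma hahnCoeff_eq_zero_of_lt {n m : ℕ} (h : n < m) (u v σ : ℂ) : hahnCoeff n u v σ m = 0 := by
  simp [hahnCoeff, cPoch_neg_natCast_of_lt h]

lemma contHahn_eq_sum_hahnCoeff (a b c d : ℂ) (n : ℕ) (x : ℝ) :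
    contHahn a b c d n x = ∑ m ∈ range (n + 1),
      hahnCoeff n (a + c) (a + d) (n + a + b + c + d - 1) m * cPoch (a + I * x) m := by
  rw [contHahn, mul_sum]
  refine sum_congr rfl fun m _ => ?_
  simp only [hahnCoeff]
  ring

lemma hahnCoeff_sub_one {u v σ : ℂ} (hu : ∀ j : ℤ, u + j ≠ 0) (hv : ∀ j : ℤ, v + j ≠ 0)
    (hσ : ∀ j : ℤ, σ + j ≠ 0) (k m : ℕ) :
    hahnCoeff (k + 1) (u - 1) (v - 1) (σ - 1) m
        - (m + 1) * hahnCoeff (k + 1) (u - 1) (v - 1) (σ - 1) (m + 1)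
      = hahnCoeff (k + 1) u v σ m
        + I * (k + 1) * (σ - u) * (σ - v) / ((σ + k - 1) * (σ + k)) *
          hahnCoeff k u v (σ - 1) m := by
  have hu' (j : ℤ) : u + j - 1 ≠ 0 := by simpa [add_sub_assoc] using hu (j - 1)
  have hv' (j : ℤ) : v + j - 1 ≠ 0 := by simpa [add_sub_assoc] using hv (j - 1)
  have hσ' (j : ℤ) : σ + j - 1 ≠ 0 := by simpa [add_sub_assoc] using hσ (j - 1)
  have hσ₁ : σ - 1 ≠ 0 := by simpa using hσ' 0
  have hk : -(k : ℂ) - 1 ≠ 0 := by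
    rw [← neg_add', neg_ne_zero]
    exact_mod_cast k.succ_ne_zero
  simp only [hahnCoeff]
  rw [cPoch_sub_one_succ u k, cPoch_sub_one_succ v k, cPoch_sub_one_succ u m,
    cPoch_sub_one_succ v m, cPoch_succ (σ - 1) k, cPoch_succ (σ - 1) m, cPoch_succ _ m,
    Nat.factorial_succ, cPoch_sub_one_eq_div (X := u) (m := m) (by exact_mod_cast hu' m),
    cPoch_sub_one_eq_div (X := v) (m := m) (by exact_mod_cast hv' m), cPoch_succ u k,
    cPoch_succ v k, cPoch_eq_cPoch_sub_one_mul_div (X := σ) (m := k + 1) hσ₁, cPoch_succ (σ - 1) k,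
    cPoch_eq_cPoch_sub_one_mul_div (X := σ) (m := m) hσ₁,
    cPoch_eq_cPoch_sub_one_mul_div (X := -(k : ℂ)) (m := m) hk,
    show -(k : ℂ) - 1 = -((k + 1 : ℕ) : ℂ) by push_cast; ring]
  push_cast
  rw [show σ - 1 + k = σ + k - 1 by ring, show σ + ((k : ℂ) + 1) - 1 = σ + k by ring]
  have : σ + k - 1 ≠ 0 := by exact_mod_cast hσ' k
  have : σ + k ≠ 0 := by exact_mod_cast hσ k
  have : u - 1 ≠ 0 := by simpa using hu' 0
  have : v - 1 ≠ 0 := by simpa using hv' 0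
  have := cPoch_ne_zero hu m
  have := cPoch_ne_zero hv m
  have := cPoch_ne_zero (fun j => by simpa [add_sub_right_comm] using hσ' j) k
  field_simp
  -- the common factor of the four terms is `I ^ (k + 1) (u)_k (v)_k (-k-1)_m (σ-1)_m / m!`
  have base : (σ + k) * ((u + m - 1) * (v + m - 1) - (m - k - 1) * (σ + m - 1))
      = (u + k) * (v + k) * (σ + m - 1) - (σ - u) * (σ - v) * (m - k - 1) := by ring
  linear_combination (I ^ (k + 1) * cPoch u k * cPoch v k * cPoch (-(k + 1)) m *
    cPoch (σ - 1) m / m.factorial) * base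

lemma sum_hahnCoeff_sub_one {u v σ : ℂ} (hu : ∀ j : ℤ, u + j ≠ 0) (hv : ∀ j : ℤ, v + j ≠ 0)
    (hσ : ∀ j : ℤ, σ + j ≠ 0) (k : ℕ) (X : ℂ) :
    ∑ m ∈ range (k + 2), hahnCoeff (k + 1) (u - 1) (v - 1) (σ - 1) m * cPoch (X - 1) m
      = ∑ m ∈ range (k + 2), hahnCoeff (k + 1) u v σ m * cPoch X m
        + I * (k + 1) * (σ - u) * (σ - v) / ((σ + k - 1) * (σ + k)) *
          ∑ m ∈ range (k + 1), hahnCoeff k u v (σ - 1) m * cPoch X m := by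
  have extend : ∑ m ∈ range (k + 1), hahnCoeff k u v (σ - 1) m * cPoch X m
      = ∑ m ∈ range (k + 2), hahnCoeff k u v (σ - 1) m * cPoch X m := by
    rw [sum_range_succ _ (k + 1), hahnCoeff_eq_zero_of_lt (lt_add_one k), zero_mul, add_zero]
  rw [sum_mul_cPoch_sub_one, hahnCoeff_eq_zero_of_lt (lt_add_one (k + 1)), mul_zero, zero_mul,
    add_zero, extend, mul_sum, ← sum_add_distrib]
  refine sum_congr rfl fun m _ => ?_
  rw [hahnCoeff_sub_one hu hv hσ]
  ring

/-- Contiguous relation for monic continuous Hahn polynomials in `a`. -/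
theorem contHahn_shift_a (a b c d : ℂ) (n : ℕ) (hn : 1 ≤ n)
    (hac : ∀ k : ℤ, a + c + (k : ℂ) ≠ 0) (had : ∀ k : ℤ, a + d + (k : ℂ) ≠ 0)
    (hs : ∀ k : ℤ, a + b + c + d + (k : ℂ) ≠ 0) :
    ∀ x : ℝ,
      contHahn (a - 1) b c d n x
        = contHahn a b c d n x
          + (Complex.I * n * (b + c + n - 1) * (b + d + n - 1) /
              ((2 * n + a + b + c + d - 3) * (2 * n + a + b + c + d - 2))) *
            contHahn a b c d (n - 1) x := by
  obtain ⟨k, rfl⟩ : ∃ k, n = k + 1 := ⟨n - 1, by omega⟩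
  intro x
  set σ : ℂ := (k + 1 : ℕ) + a + b + c + d - 1
  have hσ (j : ℤ) : σ + j ≠ 0 := by
    convert hs (k + j) using 1
    push_cast [σ]
    ring
  have key := sum_hahnCoeff_sub_one hac had hσ k (a + I * x)
  rw [Nat.add_sub_cancel, contHahn_eq_sum_hahnCoeff, contHahn_eq_sum_hahnCoeff,
    contHahn_eq_sum_hahnCoeff]
  convert key using 3 <;> push_cast [σ] <;> ring_nf
end
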